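/- arXiv:2503.01451 — 3 statements merged into one kernel-verified Lean document; each statement's English description precedes it below -/
import Mathlib

section
/- Let N ≥ 3 and k > 0. Suppose (k, C) ∈ ℝ² satisfies sin k = C·cos(k/2) and cos k - (N-1)·C·sin(k/2) = 0, with cos(k/2) ≠ 0. Then N·cos k = N - 1, i.e., k ≡ ±arccos((N-1)/N) (mod 2π). -/
/-!
The first matching condition forces `C = 2 sin (k/2)` (divide `sin k = 2 sin (k/2) cos (k/2)` by
`cos (k/2) ≠ 0`). Substituting into the second gives `cos k = (N - 1) · 2 sin² (k/2)
= (N - 1)(1 - cos k)`, which rearranges to `N cos k = N - 1`.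
-/

open Real

lemma eq_two_mul_sin_half_of_sin_eq_mul_cos_half {k C : ℝ} (h : sin k = C * cos (k / 2))
    (hcos : cos (k / 2) ≠ 0) : C = 2 * sin (k / 2) := by
  have hsin : sin k = 2 * sin (k / 2) * cos (k / 2) := by
    rw [← sin_two_mul, mul_div_cancel₀ k two_ne_zero]
  exact mul_right_cancel₀ hcos (h.symm.trans hsin)

lemma two_mul_sin_half_sq (k : ℝ) : 2 * sin (k / 2) ^ 2 = 1 - cos k := by
  conv_rhs => rw [← mul_div_cancel₀ k two_ne_zero, cos_two_mul', ← cos_sq_add_sin_sq (k / 2)]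
  ring

theorem stmt_7_general (N : ℕ) (k C : ℝ)
    (h1 : Real.sin k = C * Real.cos (k / 2))
    (h2 : Real.cos k - ((N : ℝ) - 1) * C * Real.sin (k / 2) = 0)
    (h3 : Real.cos (k / 2) ≠ 0) :
    (N : ℝ) * Real.cos k = (N : ℝ) - 1 := by
  rw [eq_two_mul_sin_half_of_sin_eq_mul_cos_half h1 h3] at h2
  have hcos : cos k = ((N : ℝ) - 1) * (1 - cos k) := by
    rw [← two_mul_sin_half_sq]
    linear_combination h2
  linear_combination hcos

theorem stmt_7 (N : ℕ) (hN : 3 ≤ N) (k C : ℝ) (hk : 0 < k)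
    (h1 : Real.sin k = C * Real.cos (k / 2))
    (h2 : Real.cos k - ((N : ℝ) - 1) * C * Real.sin (k / 2) = 0)
    (h3 : Real.cos (k / 2) ≠ 0) :
    (N : ℝ) * Real.cos k = (N : ℝ) - 1 :=
  stmt_7_general N k C h1 h2 h3
end

section
/- Let f be a smooth real-valued function on [0,1] satisfying f'' = -k²f for a constant k > 0, and let φ be a smooth compactly supported function on (0,1). Then the derivative at s = 0 of s ↦ ∫₀¹ |(f(t)·(1+sφ(t))^{-1/2})'|² · (1+sφ(t))^{-1} dt equals -∫₀¹ (f'(t)² + k²·f(t)²)·φ(t) dt. -/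
open intervalIntegral Metric

lemma aux_param (g ψ : ℝ → ℝ) (hg : Continuous g) (hψ : Continuous ψ)
    (M : ℝ) (hM0 : 0 ≤ M) (hM : ∀ t, |ψ t| ≤ M) (n : ℕ) :
    HasDerivAt (fun s : ℝ => ∫ t in (0:ℝ)..1, g t * ((1 + s * ψ t)⁻¹) ^ n)
      (∫ t in (0:ℝ)..1, g t * (-(n:ℝ) * ψ t)) 0 := by
  set ε : ℝ := (2 * (M + 1))⁻¹ with hε_def
  have hε : 0 < ε := by positivity
  have hball : ∀ x ∈ ball (0:ℝ) ε, ∀ t, (1:ℝ)/2 ≤ 1 + x * ψ t := by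
    intro x hx t
    rw [mem_ball, dist_zero_right, Real.norm_eq_abs] at hx
    have h1 : |x * ψ t| ≤ |x| * M := by
      rw [abs_mul]; exact mul_le_mul_of_nonneg_left (hM t) (abs_nonneg x)
    have h2 : |x| * M < 1/2 := by
      have : |x| * (M + 1) < ε * (M + 1) := by
        apply mul_lt_mul_of_pos_right hx; linarith
      have hε2 : ε * (M + 1) = 1/2 := by
        rw [hε_def]; field_simp
      nlinarith [abs_nonneg x]
    have := neg_abs_le (x * ψ t)
    linarith
  set F' : ℝ → ℝ → ℝ := fun x t => g t * (-(n:ℝ) * ψ t * ((1 + x * ψ t)⁻¹) ^ (n+1)) with hF'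
  have key := intervalIntegral.hasDerivAt_integral_of_dominated_loc_of_deriv_le
    (F := fun x t => g t * ((1 + x * ψ t)⁻¹) ^ n) (F' := F') (x₀ := 0)
    (a := 0) (b := 1) (bound := fun t => |g t| * ((n:ℝ) * M * 2 ^ (n+1)))
    (μ := MeasureTheory.volume) (ball_mem_nhds (0:ℝ) hε) ?_ ?_ ?_ ?_ ?_ ?_
  · have h := key.2
    have : (∫ t in (0:ℝ)..1, F' 0 t) = ∫ t in (0:ℝ)..1, g t * (-(n:ℝ) * ψ t) := by
      apply intervalIntegral.integral_congr
      intro t _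
      simp [hF']
    rwa [this] at h
  · -- measurability of F x for x near 0
    filter_upwards [ball_mem_nhds (0:ℝ) hε] with x hx
    have hcont : Continuous fun t => g t * ((1 + x * ψ t)⁻¹) ^ n := by
      apply hg.mul
      apply Continuous.pow
      apply Continuous.inv₀ (by continuity)
      intro t
      have := hball x hx t
      linarith
    exact hcont.aestronglyMeasurable
  · -- integrability of F 0
    apply Continuous.intervalIntegrable
    apply hg.mul
    apply Continuous.pow
    apply Continuous.inv₀ (by continuity)
    intro t
    have := hball 0 (mem_ball_self hε) t
    linarith
  · -- measurability of F' 0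
    apply Continuous.aestronglyMeasurable
    apply hg.mul
    apply Continuous.mul (by continuity)
    apply Continuous.pow
    apply Continuous.inv₀ (by continuity)
    intro t
    have := hball 0 (mem_ball_self hε) t
    linarith
  · -- bound
    apply Filter.Eventually.of_forall
    intro t _ x hx
    have h2 : (1:ℝ)/2 ≤ 1 + x * ψ t := hball x hx t
    have hinv : (1 + x * ψ t)⁻¹ ≤ 2 := by
      rw [inv_le_comm₀ (by linarith) (by norm_num)]
      linarith
    have hinv0 : 0 ≤ (1 + x * ψ t)⁻¹ := by positivity
    have hpow : ((1 + x * ψ t)⁻¹) ^ (n+1) ≤ 2 ^ (n+1) :=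
      pow_le_pow_left₀ hinv0 hinv _
    have hpow0 : 0 ≤ ((1 + x * ψ t)⁻¹) ^ (n+1) := by positivity
    rw [Real.norm_eq_abs, hF']
    rw [abs_mul, abs_mul, abs_mul, abs_neg, abs_of_nonneg (by positivity : (0:ℝ) ≤ (n:ℝ)),
      abs_of_nonneg hpow0]
    apply mul_le_mul_of_nonneg_left _ (abs_nonneg (g t))
    exact mul_le_mul (mul_le_mul_of_nonneg_left (hM t) (by positivity)) hpow hpow0 (by positivity)
  · -- bound integrable
    apply Continuous.intervalIntegrable
    exact (hg.abs).mul continuous_const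
  · -- pointwise differentiability
    apply Filter.Eventually.of_forall
    intro t _ x hx
    have h2 : (1:ℝ)/2 ≤ 1 + x * ψ t := hball x hx t
    have hne : 1 + x * ψ t ≠ 0 := by linarith
    have hbase : HasDerivAt (fun s : ℝ => 1 + s * ψ t) (ψ t) x := by
      simpa using ((hasDerivAt_id x).mul_const (ψ t)).const_add 1
    have hinv : HasDerivAt (fun s : ℝ => (1 + s * ψ t)⁻¹)
        (-(ψ t) / (1 + x * ψ t) ^ 2) x := hbase.inv hne
    have hpow : HasDerivAt (fun s : ℝ => ((1 + s * ψ t)⁻¹) ^ n)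
        ((n:ℝ) * ((1 + x * ψ t)⁻¹) ^ (n-1) * (-(ψ t) / (1 + x * ψ t) ^ 2)) x := hinv.pow n
    have := hpow.const_mul (g t)
    convert this using 1
    · rfl
    rcases n with _ | m
    · simp [hF']
    · show g t * (-(↑(m+1) : ℝ) * ψ t * ((1 + x * ψ t)⁻¹) ^ (m+1+1)) =
        g t * ((↑(m+1) : ℝ) * ((1 + x * ψ t)⁻¹) ^ m * (-(ψ t) / (1 + x * ψ t) ^ 2))
      have e1 : ((1 + x * ψ t)⁻¹) ^ (m + 1 + 1) = ((1 + x * ψ t)⁻¹) ^ m * ((1 + x * ψ t)⁻¹) ^ 2 := by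
        rw [← pow_add]
      have e2 : -(ψ t) / (1 + x * ψ t) ^ 2 = -(ψ t) * ((1 + x * ψ t)⁻¹) ^ 2 := by
        rw [div_eq_mul_inv, inv_pow]
      rw [e1, e2]
      ring

set_option maxHeartbeats 1000000 in
lemma alg_aux (r F Q S s X : ℝ) (hS : S ≠ 0) (hX : S ^ 2 = X) :
    (r * S⁻¹ + F * (-(1 / (2 * S) * (s * Q)) / S ^ 2)) ^ 2 * X⁻¹
      = r ^ 2 * (X⁻¹) ^ 2 +
        (s * (-(F * r * Q) * (X⁻¹) ^ 3) + s ^ 2 * (F ^ 2 * Q ^ 2 / 4 * (X⁻¹) ^ 4)) := by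
  subst hX; field_simp; ring

lemma half_le_aux (ψ : ℝ → ℝ) (M : ℝ) (hM : ∀ t, |ψ t| ≤ M) {x : ℝ}
    (hx : |x| < (2 * (M + 1))⁻¹) (t : ℝ) : (1:ℝ)/2 ≤ 1 + x * ψ t := by
  have hM0 : 0 ≤ M := le_trans (abs_nonneg _) (hM 0)
  have h1 : |x * ψ t| ≤ |x| * M := by
    rw [abs_mul]; exact mul_le_mul_of_nonneg_left (hM t) (abs_nonneg x)
  have h2 : |x| * M < 1/2 := by
    have h3 : |x| * (M + 1) < (2 * (M + 1))⁻¹ * (M + 1) := by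
      apply mul_lt_mul_of_pos_right hx; linarith
    have h4 : (2 * (M + 1))⁻¹ * (M + 1) = 1/2 := by field_simp
    nlinarith [abs_nonneg x]
  have := neg_abs_le (x * ψ t)
  linarith

theorem stmt_10 (k : ℝ) (hk : 0 < k) (f φ : ℝ → ℝ)
    (hf : ContDiff ℝ (⊤ : ℕ∞) f)
    (hode : ∀ t : ℝ, deriv (deriv f) t = -(k ^ 2) * f t)
    (hφ : ContDiff ℝ (⊤ : ℕ∞) φ)
    (hsupp : Function.support φ ⊆ Set.Ioo (0 : ℝ) 1) :
    HasDerivAt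
      (fun s : ℝ => ∫ t in (0 : ℝ)..1,
        (deriv (fun u : ℝ => f u * (Real.sqrt (1 + s * φ u))⁻¹) t) ^ 2 *
          (1 + s * φ t)⁻¹)
      (-∫ t in (0 : ℝ)..1, ((deriv f t) ^ 2 + k ^ 2 * (f t) ^ 2) * φ t)
      0 := by
  -- basic continuity/differentiability facts
  have hfc : Continuous f := hf.continuous
  have hφc : Continuous φ := hφ.continuous
  have hf'c : Continuous (deriv f) := hf.continuous_deriv (by simp)
  have hφ'c : Continuous (deriv φ) := hφ.continuous_deriv (by simp)
  have hfd : ∀ t, HasDerivAt f (deriv f t) t := fun t =>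
    ((hf.differentiable (by simp)) t).hasDerivAt
  have hf'cd := (contDiff_infty_iff_deriv.mp (hf.of_le (by simp))).2
  have hf'd : ∀ t, HasDerivAt (deriv f) (deriv (deriv f) t) t := fun t =>
    ((hf'cd.differentiable (by simp)) t).hasDerivAt
  have hφd : ∀ t, HasDerivAt φ (deriv φ t) t := fun t =>
    ((hφ.differentiable (by simp)) t).hasDerivAt
  -- bound on φ
  have hcs : HasCompactSupport φ := by
    apply HasCompactSupport.intro (isCompact_Icc (a := (0:ℝ)) (b := 1))
    intro x hx
    by_contra h
    exact hx (Set.Ioo_subset_Icc_self (hsupp h))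
  obtain ⟨M, hM⟩ := hcs.exists_bound_of_continuous hφc
  have hM' : ∀ t, |φ t| ≤ M := fun t => by simpa using hM t
  have hM0 : 0 ≤ M := le_trans (abs_nonneg _) (hM' 0)
  set ε : ℝ := (2 * (M + 1))⁻¹ with hε_def
  have hε : 0 < ε := by positivity
  -- the three parametric integrals
  set g₁ : ℝ → ℝ := fun t => deriv f t ^ 2 with hg₁
  set g₂ : ℝ → ℝ := fun t => -(f t * deriv f t * deriv φ t) with hg₂
  set g₃ : ℝ → ℝ := fun t => f t ^ 2 * deriv φ t ^ 2 / 4 with hg₃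
  have hg₁c : Continuous g₁ := hf'c.pow 2
  have hg₂c : Continuous g₂ := ((hfc.mul hf'c).mul hφ'c).neg
  have hg₃c : Continuous g₃ := ((hfc.pow 2).mul (hφ'c.pow 2)).div_const 4
  have h1 := aux_param g₁ φ hg₁c hφc M hM0 hM' 2
  have h2 := aux_param g₂ φ hg₂c hφc M hM0 hM' 3
  have h3 := aux_param g₃ φ hg₃c hφc M hM0 hM' 4
  have hsum := (h1.add ((hasDerivAt_id (0:ℝ)).fun_mul h2)).add ((hasDerivAt_pow 2 (0:ℝ)).fun_mul h3)
  -- eventual equality with the original function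
  have hFG : (fun s : ℝ => ∫ t in (0 : ℝ)..1,
        (deriv (fun u : ℝ => f u * (Real.sqrt (1 + s * φ u))⁻¹) t) ^ 2 *
          (1 + s * φ t)⁻¹) =ᶠ[nhds (0:ℝ)]
      (fun s : ℝ => ((∫ t in (0:ℝ)..1, g₁ t * ((1 + s * φ t)⁻¹) ^ 2) +
        id s * ∫ t in (0:ℝ)..1, g₂ t * ((1 + s * φ t)⁻¹) ^ 3) +
        s ^ 2 * ∫ t in (0:ℝ)..1, g₃ t * ((1 + s * φ t)⁻¹) ^ 4) := by
    filter_upwards [Metric.ball_mem_nhds (0:ℝ) hε] with s hs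
    rw [Metric.mem_ball, dist_zero_right, Real.norm_eq_abs] at hs
    have hpos : ∀ t, (1:ℝ)/2 ≤ 1 + s * φ t := half_le_aux φ M hM' hs
    have hwc : Continuous fun t => (1 + s * φ t)⁻¹ := by
      apply Continuous.inv₀ (by continuity)
      intro t; have := hpos t; linarith
    -- pointwise identity of integrands
    have hpt : ∀ t, (deriv (fun u : ℝ => f u * (Real.sqrt (1 + s * φ u))⁻¹) t) ^ 2 *
        (1 + s * φ t)⁻¹ =
        g₁ t * ((1 + s * φ t)⁻¹) ^ 2 + (s * (g₂ t * ((1 + s * φ t)⁻¹) ^ 3) +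
          s ^ 2 * (g₃ t * ((1 + s * φ t)⁻¹) ^ 4)) := by
      intro t
      have hXpos : (0:ℝ) < 1 + s * φ t := by have := hpos t; linarith
      have hSpos : 0 < Real.sqrt (1 + s * φ t) := Real.sqrt_pos.mpr hXpos
      have hx : HasDerivAt (fun u : ℝ => 1 + s * φ u) (s * deriv φ t) t :=
        ((hφd t).const_mul s).const_add 1
      have hsq : HasDerivAt (fun u : ℝ => Real.sqrt (1 + s * φ u))
          (1 / (2 * Real.sqrt (1 + s * φ t)) * (s * deriv φ t)) t :=
        (Real.hasDerivAt_sqrt (ne_of_gt hXpos)).comp t hx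
      have hinv : HasDerivAt (fun u : ℝ => (Real.sqrt (1 + s * φ u))⁻¹)
          (-(1 / (2 * Real.sqrt (1 + s * φ t)) * (s * deriv φ t)) /
            (Real.sqrt (1 + s * φ t)) ^ 2) t := hsq.inv (ne_of_gt hSpos)
      have hprod := (hfd t).fun_mul hinv
      rw [hprod.deriv]
      have hS2 : Real.sqrt (1 + s * φ t) ^ 2 = 1 + s * φ t :=
        Real.sq_sqrt (le_of_lt hXpos)
      have hSne : Real.sqrt (1 + s * φ t) ≠ 0 := ne_of_gt hSpos
      simp only [hg₁, hg₂, hg₃]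
      exact alg_aux (deriv f t) (f t) (deriv φ t) (Real.sqrt (1 + s * φ t)) s
        (1 + s * φ t) hSne hS2
    have int1 : IntervalIntegrable (fun t => g₁ t * ((1 + s * φ t)⁻¹) ^ 2)
        MeasureTheory.volume 0 1 := (hg₁c.mul (hwc.pow 2)).intervalIntegrable 0 1
    have int2 : IntervalIntegrable (fun t => s * (g₂ t * ((1 + s * φ t)⁻¹) ^ 3))
        MeasureTheory.volume 0 1 :=
      (continuous_const.mul (hg₂c.mul (hwc.pow 3))).intervalIntegrable 0 1
    have int3 : IntervalIntegrable (fun t => s ^ 2 * (g₃ t * ((1 + s * φ t)⁻¹) ^ 4))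
        MeasureTheory.volume 0 1 :=
      (continuous_const.mul (hg₃c.mul (hwc.pow 4))).intervalIntegrable 0 1
    calc (∫ t in (0:ℝ)..1,
        (deriv (fun u : ℝ => f u * (Real.sqrt (1 + s * φ u))⁻¹) t) ^ 2 * (1 + s * φ t)⁻¹)
        = ∫ t in (0:ℝ)..1, (g₁ t * ((1 + s * φ t)⁻¹) ^ 2 +
            (s * (g₂ t * ((1 + s * φ t)⁻¹) ^ 3) + s ^ 2 * (g₃ t * ((1 + s * φ t)⁻¹) ^ 4))) :=
          intervalIntegral.integral_congr (fun t _ => hpt t)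
      _ = (∫ t in (0:ℝ)..1, g₁ t * ((1 + s * φ t)⁻¹) ^ 2) +
            ((∫ t in (0:ℝ)..1, s * (g₂ t * ((1 + s * φ t)⁻¹) ^ 3)) +
             (∫ t in (0:ℝ)..1, s ^ 2 * (g₃ t * ((1 + s * φ t)⁻¹) ^ 4))) := by
          rw [intervalIntegral.integral_add int1 (int2.add int3),
            intervalIntegral.integral_add int2 int3]
      _ = ((∫ t in (0:ℝ)..1, g₁ t * ((1 + s * φ t)⁻¹) ^ 2) +
            id s * ∫ t in (0:ℝ)..1, g₂ t * ((1 + s * φ t)⁻¹) ^ 3) +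
            s ^ 2 * ∫ t in (0:ℝ)..1, g₃ t * ((1 + s * φ t)⁻¹) ^ 4 := by
          rw [intervalIntegral.integral_const_mul, intervalIntegral.integral_const_mul]
          simp only [id_eq]; ring
  -- now identify the value of the derivative
  have hmain := hsum.congr_of_eventuallyEq hFG
  convert hmain using 1
  · rfl
  · rfl
  -- value computation
  set A : ℝ := ∫ t in (0:ℝ)..1, deriv f t ^ 2 * φ t with hA
  set B : ℝ := ∫ t in (0:ℝ)..1, f t ^ 2 * φ t with hB
  set C : ℝ := ∫ t in (0:ℝ)..1, f t * deriv f t * deriv φ t with hC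
  have intA : IntervalIntegrable (fun t => deriv f t ^ 2 * φ t) MeasureTheory.volume 0 1 :=
    ((hf'c.pow 2).mul hφc).intervalIntegrable 0 1
  have intB : IntervalIntegrable (fun t => k ^ 2 * (f t ^ 2 * φ t)) MeasureTheory.volume 0 1 :=
    (continuous_const.mul ((hfc.pow 2).mul hφc)).intervalIntegrable 0 1
  -- integration by parts
  have hIBP : C = -(A - k ^ 2 * B) := by
    have hu : ∀ x ∈ Set.uIcc (0:ℝ) 1, HasDerivAt (fun t => f t * deriv f t)
        (deriv f x ^ 2 - k ^ 2 * f x ^ 2) x := by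
      intro x _
      have := (hfd x).fun_mul (hf'd x)
      convert this using 1
      · rfl
      · rfl
      rw [hode x]; ring
    have hv : ∀ x ∈ Set.uIcc (0:ℝ) 1, HasDerivAt φ (deriv φ x) x := fun x _ => hφd x
    have hu' : IntervalIntegrable (fun x => deriv f x ^ 2 - k ^ 2 * f x ^ 2)
        MeasureTheory.volume 0 1 :=
      ((hf'c.pow 2).sub (continuous_const.mul (hfc.pow 2))).intervalIntegrable 0 1
    have hv' : IntervalIntegrable (deriv φ) MeasureTheory.volume 0 1 :=
      hφ'c.intervalIntegrable 0 1
    have hibp := intervalIntegral.integral_mul_deriv_eq_deriv_mul hu hv hu' hv'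
    have hφ0 : φ 0 = 0 := by
      by_contra h
      have := hsupp (Function.mem_support.mpr h)
      simp at this
    have hφ1 : φ 1 = 0 := by
      by_contra h
      have := hsupp (Function.mem_support.mpr h)
      simp at this
    rw [hφ0, hφ1] at hibp
    have hsplit : (∫ x in (0:ℝ)..1, (deriv f x ^ 2 - k ^ 2 * f x ^ 2) * φ x) =
        A - k ^ 2 * B := by
      have e : (∫ x in (0:ℝ)..1, (deriv f x ^ 2 - k ^ 2 * f x ^ 2) * φ x) =
          ∫ x in (0:ℝ)..1, (deriv f x ^ 2 * φ x - k ^ 2 * (f x ^ 2 * φ x)) :=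
        intervalIntegral.integral_congr (fun t _ => by ring)
      rw [e, intervalIntegral.integral_sub intA intB, intervalIntegral.integral_const_mul]
    rw [hsplit] at hibp
    rw [hC]
    simp only [mul_zero, zero_mul, zero_sub] at hibp
    linarith [hibp]
  -- final value equality
  have eV : (-∫ t in (0:ℝ)..1, ((deriv f t) ^ 2 + k ^ 2 * (f t) ^ 2) * φ t) =
      -(A + k ^ 2 * B) := by
    have e : (∫ t in (0:ℝ)..1, ((deriv f t) ^ 2 + k ^ 2 * (f t) ^ 2) * φ t) =
        ∫ t in (0:ℝ)..1, (deriv f t ^ 2 * φ t + k ^ 2 * (f t ^ 2 * φ t)) :=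
      intervalIntegral.integral_congr (fun t _ => by ring)
    rw [e, intervalIntegral.integral_add intA intB, intervalIntegral.integral_const_mul]
  have eA : (∫ t in (0:ℝ)..1, g₁ t * (-((2:ℕ):ℝ) * φ t)) = -2 * A := by
    rw [hA, ← intervalIntegral.integral_const_mul]
    apply intervalIntegral.integral_congr
    intro t _
    rw [hg₁]; push_cast; ring
  have eB : (∫ t in (0:ℝ)..1, g₂ t * ((1 + (0:ℝ) * φ t)⁻¹) ^ 3) = -C := by
    rw [hC, ← intervalIntegral.integral_neg]
    apply intervalIntegral.integral_congr
    intro t _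
    rw [hg₂]; simp
  rw [eV, eA, eB]
  norm_num
  linarith [hIBP]
end

section
/- Let N ≥ 3. In ℝ^{N(N-1)/2}, indexed by pairs (i,j) with 1 ≤ i < j ≤ N, consider the vectors F_k (1 ≤ k ≤ N) defined componentwise by (F_k)_{lm} = -c/(N-1)² if k ∉ {l,m} and (F_k)_{lm} = c/(N-1) if k ∈ {l,m}, and the vectors F_{ij} (1 ≤ i < j ≤ N) defined by (F_{ij})_{ij} = c(N²-2)/(N(N-1)²), (F_{ij})_{lm} = -2c(N+1)/(N(N-1)²) if {l,m} ∩ {i,j} = ∅, and (F_{ij})_{lm} = c(N²-N-2)/(N(N-1)²) if {l,m} ∩ {i,j} is a singleton, where c > 0 is a fixed constant. Then the span of all the vectors F_k and F_{ij} is all of ℝ^{N(N-1)/2}. -/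
/-!
Both families are affine combinations of simpler vectors. With `χ_k` the indicator of the pairs
containing `k`, `e_q` the standard basis vector at the pair `q = (i,j)` and `a = cN/(N-1)²`,
  `F_k = a χ_k - c/(N-1)² · 1`,
  `F_q = -a e_q + c(N+1)/(N-1)² (χ_i + χ_j) - 2c(N+1)/(N(N-1)²) · 1`.
Every pair has exactly two endpoints, so `∑ F_k = a · 1`; since `a ≠ 0` the span contains `1`,
then every `χ_k`, then every `e_q`.
-/

/-- Index set of pairs `(l, m)` with `l < m` in `Fin N`. -/
def PairIdx (N : ℕ) := {p : Fin N × Fin N // p.1 < p.2}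

instance (N : ℕ) : DecidableEq (PairIdx N) := Subtype.instDecidableEq

/-- The vector `F_k`: component at a pair `(l,m)` is `c/(N-1)` if `k ∈ {l,m}`,
and `-c/(N-1)²` otherwise. -/
noncomputable def Fvert (N : ℕ) (c : ℝ) (k : Fin N) : PairIdx N → ℝ := fun p =>
  if k = p.val.1 ∨ k = p.val.2 then c / ((N : ℝ) - 1)
  else -c / ((N : ℝ) - 1) ^ 2

/-- The vector `F_{ij}` (for the pair `q = (i,j)`). -/
noncomputable def Fedge (N : ℕ) (c : ℝ) (q : PairIdx N) : PairIdx N → ℝ := fun p =>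
  if p = q then c * ((N : ℝ) ^ 2 - 2) / ((N : ℝ) * ((N : ℝ) - 1) ^ 2)
  else if p.val.1 ≠ q.val.1 ∧ p.val.1 ≠ q.val.2 ∧ p.val.2 ≠ q.val.1 ∧ p.val.2 ≠ q.val.2 then
    -(2 * c * ((N : ℝ) + 1)) / ((N : ℝ) * ((N : ℝ) - 1) ^ 2)
  else c * ((N : ℝ) ^ 2 - (N : ℝ) - 2) / ((N : ℝ) * ((N : ℝ) - 1) ^ 2)

theorem Submodule.eq_top_of_forall_single_mem {R ι : Type*} [Semiring R] [Finite ι]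
    [DecidableEq ι] {S : Submodule R (ι → R)} (h : ∀ i, Pi.single i 1 ∈ S) : S = ⊤ := by
  rw [eq_top_iff, ← (Pi.basisFun R ι).span_eq, Submodule.span_le]
  rintro _ ⟨i, rfl⟩
  simpa only [Pi.basisFun_apply, SetLike.mem_coe] using h i

instance (N : ℕ) : Finite (PairIdx N) := Subtype.finite

namespace PairIdx

variable {N : ℕ}

def incidence (k : Fin N) : PairIdx N → ℝ := fun p =>
  if k = p.val.1 ∨ k = p.val.2 then 1 else 0

theorem sum_incidence (p : PairIdx N) : ∑ k, incidence k p = 2 := by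
  have hne : p.val.1 ≠ p.val.2 := p.2.ne
  simp only [incidence, Finset.sum_ite, Finset.sum_const_zero, add_zero, Finset.sum_const,
    nsmul_eq_mul, mul_one]
  rw [Finset.filter_or, Finset.card_union_of_disjoint] <;> simp [Finset.filter_eq', hne]

theorem Fvert_eq_incidence (hN₁ : (N : ℝ) - 1 ≠ 0) (c : ℝ) (k : Fin N) :
    Fvert N c k = (c * N / ((N : ℝ) - 1) ^ 2) • incidence k - (c / ((N : ℝ) - 1) ^ 2) • 1 := by
  funext p
  simp only [Fvert, incidence, Pi.sub_apply, Pi.smul_apply, Pi.one_apply, smul_eq_mul]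
  split_ifs
  · field_simp
  · field_simp
    ring

theorem sum_Fvert (hN₁ : (N : ℝ) - 1 ≠ 0) (c : ℝ) :
    ∑ k, Fvert N c k = (c * N / ((N : ℝ) - 1) ^ 2) • 1 := by
  funext p
  simp only [Fvert_eq_incidence hN₁, Finset.sum_apply, Pi.sub_apply, Pi.smul_apply, Pi.one_apply,
    smul_eq_mul, Finset.sum_sub_distrib, ← Finset.mul_sum, sum_incidence, Finset.sum_const,
    Finset.card_univ, Fintype.card_fin, nsmul_eq_mul]
  field_simp
  ring

theorem Fedge_eq_single_incidence (hN₀ : (N : ℝ) ≠ 0) (hN₁ : (N : ℝ) - 1 ≠ 0) (c : ℝ)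
    (q : PairIdx N) :
    Fedge N c q = (-(c * N / ((N : ℝ) - 1) ^ 2)) • Pi.single q 1
      + (c * (N + 1) / ((N : ℝ) - 1) ^ 2) • (incidence q.val.1 + incidence q.val.2)
      - (2 * c * (N + 1) / (N * ((N : ℝ) - 1) ^ 2)) • 1 := by
  funext p
  simp only [Fedge, incidence, Pi.sub_apply, Pi.add_apply, Pi.smul_apply, Pi.one_apply,
    Pi.single_apply, smul_eq_mul]
  by_cases hpq : p = q
  · subst hpq
    simp only [if_true, true_or, or_true]
    field_simp
    ring
  have hnot_both : ¬ ((q.val.1 = p.val.1 ∨ q.val.1 = p.val.2) ∧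
      (q.val.2 = p.val.1 ∨ q.val.2 = p.val.2)) := by
    have := p.2
    have := q.2
    grind [Subtype.ext_iff]
  split_ifs <;> first | (exfalso; grind) | (field_simp; ring)

end PairIdx

open PairIdx

theorem stmt_11 (N : ℕ) (hN : 3 ≤ N) (c : ℝ) (hc : 0 < c) :
    Submodule.span ℝ (Set.range (Fvert N c) ∪ Set.range (Fedge N c)) =
      (⊤ : Submodule ℝ (PairIdx N → ℝ)) := by
  set S := Submodule.span ℝ (Set.range (Fvert N c) ∪ Set.range (Fedge N c))
  have hN' : (3 : ℝ) ≤ N := by exact_mod_cast hN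
  have hN₀ : (N : ℝ) ≠ 0 := by positivity
  have hN₁ : (N : ℝ) - 1 ≠ 0 := by linarith
  have hscale : c * N / ((N : ℝ) - 1) ^ 2 ≠ 0 := by positivity
  have hFvert (k : Fin N) : Fvert N c k ∈ S := Submodule.subset_span (.inl ⟨k, rfl⟩)
  have hFedge (q : PairIdx N) : Fedge N c q ∈ S := Submodule.subset_span (.inr ⟨q, rfl⟩)
  have hone : (1 : PairIdx N → ℝ) ∈ S := by
    rw [← S.smul_mem_iff hscale, ← sum_Fvert hN₁]
    exact S.sum_mem fun k _ => hFvert k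
  have hincidence (k : Fin N) : incidence k ∈ S := by
    rw [← S.smul_mem_iff hscale, ← S.sub_mem_iff_left (S.smul_mem _ hone),
      ← Fvert_eq_incidence hN₁]
    exact hFvert k
  refine Submodule.eq_top_of_forall_single_mem fun q => ?_
  rw [← S.smul_mem_iff (neg_ne_zero.2 hscale),
    ← S.add_mem_iff_left (S.smul_mem _ (S.add_mem (hincidence _) (hincidence _))),
    ← S.sub_mem_iff_left (S.smul_mem _ hone), ← Fedge_eq_single_incidence hN₀ hN₁]
  exact hFedge q
end
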